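/- Let ν be an ensemble of unitaries such that for every balanced monomial M of degree ≤ k in matrix entries of U, |E_ν M(U) - E_H M(U)| ≤ ε/d^k. Let f(U) = Σᵢ αᵢ Mᵢ(U) be a polynomial with monomials Mᵢ of total degree such that 2m·deg(f) ≤ k, and set α = Σᵢ |αᵢ|. Then for any real constant μ, |E_ν (f - μ)^{2m} - E_H (f - μ)^{2m}| ≤ (ε/d^k)·(α + |μ|)^{2m}. -/

import Mathlib

open MeasureTheory Matrix

noncomputable instance {n : Type*} [Fintype n] [DecidableEq n] :
    MeasurableSpace (Matrix.unitaryGroup n ℂ) := borel _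
instance {n : Type*} [Fintype n] [DecidableEq n] :
    BorelSpace (Matrix.unitaryGroup n ℂ) := ⟨rfl⟩

/-- A balanced monomial of degree `j` in the entries of a unitary matrix:
`j` unconjugated entries and `j` conjugated entries. -/
noncomputable def balMonomial {d j : ℕ} (p q r s : Fin j → Fin d)
    (U : Matrix.unitaryGroup (Fin d) ℂ) : ℂ :=
  (∏ t, (U : Matrix (Fin d) (Fin d) ℂ) (p t) (q t)) *
    ∏ t, (starRingEnd ℂ) ((U : Matrix (Fin d) (Fin d) ℂ) (r t) (s t))

lemma entry_abs_le_one {d : ℕ} (U : Matrix.unitaryGroup (Fin d) ℂ) (i j : Fin d) :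
    ‖((U : Matrix (Fin d) (Fin d) ℂ) i j)‖ ≤ 1 := by
  have h : (U : Matrix (Fin d) (Fin d) ℂ) * star (U : Matrix (Fin d) (Fin d) ℂ) = 1 :=
    (Unitary.mem_iff.mp U.2).2
  have h2 : ∑ l, Complex.normSq ((U : Matrix (Fin d) (Fin d) ℂ) i l) = 1 := by
    have h0 := congrFun (congrFun h i) i
    rw [Matrix.mul_apply] at h0
    simp only [Matrix.one_apply_eq] at h0
    have h3 : ∑ l, ((Complex.normSq ((U : Matrix (Fin d) (Fin d) ℂ) i l) : ℂ)) = 1 := by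
      rw [← h0]
      refine Finset.sum_congr rfl fun l _ => ?_
      simp [Matrix.star_apply, Complex.mul_conj]
    have := congrArg Complex.re h3
    simpa using this
  have hle : Complex.normSq ((U : Matrix (Fin d) (Fin d) ℂ) i j) ≤ 1 := by
    rw [← h2]
    exact Finset.single_le_sum (fun l _ => Complex.normSq_nonneg _) (Finset.mem_univ j)
  rw [Complex.norm_def]
  exact Real.sqrt_le_one.mpr hle

lemma balMonomial_abs_le_one {d j : ℕ} (p q r s : Fin j → Fin d)
    (U : Matrix.unitaryGroup (Fin d) ℂ) : ‖balMonomial p q r s U‖ ≤ 1 := by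
  unfold balMonomial
  rw [norm_mul, norm_prod, norm_prod]
  have h1 : ∏ t, ‖((U : Matrix (Fin d) (Fin d) ℂ) (p t) (q t))‖ ≤ 1 :=
    Finset.prod_le_one (fun t _ => norm_nonneg _) (fun t _ => entry_abs_le_one U _ _)
  have h2 : ∏ t, ‖((starRingEnd ℂ) ((U : Matrix (Fin d) (Fin d) ℂ) (r t) (s t)))‖ ≤ 1 :=
    Finset.prod_le_one (fun t _ => norm_nonneg _)
      (fun t _ => by rw [Complex.norm_conj]; exact entry_abs_le_one U _ _)
  calc _ ≤ 1 * 1 := mul_le_mul h1 h2 (Finset.prod_nonneg fun t _ => norm_nonneg _) zero_le_one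
  _ = 1 := mul_one 1

lemma balMonomial_continuous {d j : ℕ} (p q r s : Fin j → Fin d) :
    Continuous (balMonomial (d := d) p q r s) := by
  have hc : Continuous fun U : Matrix.unitaryGroup (Fin d) ℂ =>
      (U : Matrix (Fin d) (Fin d) ℂ) := continuous_subtype_val
  have he : ∀ a b : Fin d, Continuous fun U : Matrix.unitaryGroup (Fin d) ℂ =>
      (U : Matrix (Fin d) (Fin d) ℂ) a b := fun a b =>
    (continuous_apply b).comp ((continuous_apply a).comp hc)
  unfold balMonomial
  exact ((continuous_finset_prod _ fun t _ => he _ _).mul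
    (continuous_finset_prod _ fun t _ => Complex.continuous_conj.comp (he _ _)))

lemma balMonomial_integrable {d j : ℕ} (p q r s : Fin j → Fin d)
    (ρ : Measure (Matrix.unitaryGroup (Fin d) ℂ)) [IsProbabilityMeasure ρ] :
    Integrable (fun U => balMonomial p q r s U) ρ := by
  refine (integrable_const (1 : ℝ)).mono'
    (balMonomial_continuous p q r s).aestronglyMeasurable ?_
  exact Filter.Eventually.of_forall fun U => balMonomial_abs_le_one p q r s U

lemma balMonomial_of_fintype {d : ℕ} {τ : Type*} [Fintype τ] (P Q R S : τ → Fin d) :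
    ∃ p q r s : Fin (Fintype.card τ) → Fin d, ∀ U : Matrix.unitaryGroup (Fin d) ℂ,
      ((∏ t, (U : Matrix (Fin d) (Fin d) ℂ) (P t) (Q t)) *
        ∏ t, (starRingEnd ℂ) ((U : Matrix (Fin d) (Fin d) ℂ) (R t) (S t)))
        = balMonomial p q r s U := by
  set e := (Fintype.equivFin τ).symm
  refine ⟨P ∘ e, Q ∘ e, R ∘ e, S ∘ e, fun U => ?_⟩
  unfold balMonomial
  rw [← e.prod_comp fun t => (U : Matrix (Fin d) (Fin d) ℂ) (P t) (Q t),
    ← e.prod_comp fun t => (starRingEnd ℂ) ((U : Matrix (Fin d) (Fin d) ℂ) (R t) (S t))]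
  rfl


/-- Moments of a polynomial under an approximate `k`-design are close to the Haar moments. -/
theorem approx_design_moments
    (d k K m : ℕ) (hd : 0 < d) (hm : 0 < m) (ε : ℝ) (hε : 0 ≤ ε)
    (hdeg : 2 * m * K ≤ k)
    (ν μH : Measure (Matrix.unitaryGroup (Fin d) ℂ))
    [IsProbabilityMeasure ν] [IsProbabilityMeasure μH] [μH.IsHaarMeasure]
    (hmono : ∀ j : ℕ, j ≤ k → ∀ p q r s : Fin j → Fin d,
      ‖∫ U, balMonomial p q r s U ∂ν - ∫ U, balMonomial p q r s U ∂μH‖ ≤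
        ε / d ^ k)
    {ι : Type*} [Fintype ι] (α : ι → ℂ)
    (deg : ι → ℕ) (hdegK : ∀ i, deg i ≤ K)
    (p q r s : (i : ι) → Fin (deg i) → Fin d)
    (f : Matrix.unitaryGroup (Fin d) ℂ → ℂ)
    (hf : ∀ U, f U = ∑ i, α i * balMonomial (p i) (q i) (r i) (s i) U)
    (μ : ℝ) :
    ‖∫ U, (f U - μ) ^ (2 * m) ∂ν - ∫ U, (f U - μ) ^ (2 * m) ∂μH‖ ≤
      ε / d ^ k * ((∑ i, ‖α i‖) + |μ|) ^ (2 * m) := by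
  classical
  set D : Option ι → ℕ := fun o => Option.elim o 0 deg with hD
  set β : Option ι → ℂ := fun o => Option.elim o (-(μ : ℂ)) α with hβ
  let P : (o : Option ι) → Fin (D o) → Fin d := fun o => Option.rec Fin.elim0 p o
  let Q : (o : Option ι) → Fin (D o) → Fin d := fun o => Option.rec Fin.elim0 q o
  let R : (o : Option ι) → Fin (D o) → Fin d := fun o => Option.rec Fin.elim0 r o
  let S : (o : Option ι) → Fin (D o) → Fin d := fun o => Option.rec Fin.elim0 s o
  -- pointwise expansion of f - μ
  have hfμ : ∀ U, f U - (μ : ℂ) =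
      ∑ o : Option ι, β o * balMonomial (P o) (Q o) (R o) (S o) U := by
    intro U
    rw [Fintype.sum_option, hf U]
    have h1 : balMonomial (P none) (Q none) (R none) (S none) U = 1 := by
      haveI : IsEmpty (Fin (D none)) := Fin.isEmpty
      simp [balMonomial, Finset.univ_eq_empty]
    rw [h1]
    simp only [hβ, Option.elim]
    rw [sub_eq_add_neg, add_comm, mul_one]; rfl
  -- expansion of the power
  have hpow : ∀ U, (f U - (μ : ℂ)) ^ (2 * m) =
      ∑ g : Fin (2 * m) → Option ι, (∏ t, β (g t)) *
        ∏ t, balMonomial (P (g t)) (Q (g t)) (R (g t)) (S (g t)) U := by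
    intro U
    rw [hfμ U, Fintype.sum_pow]
    exact Finset.sum_congr rfl fun g _ => Finset.prod_mul_distrib
  -- each product of balanced monomials is a balanced monomial of degree ≤ k
  have key : ∀ g : Fin (2 * m) → Option ι, ∃ j, j ≤ k ∧ ∃ p' q' r' s' : Fin j → Fin d,
      ∀ U, (∏ t, balMonomial (P (g t)) (Q (g t)) (R (g t)) (S (g t)) U)
        = balMonomial p' q' r' s' U := by
    intro g
    refine ⟨Fintype.card (Σ t : Fin (2 * m), Fin (D (g t))), ?_, ?_⟩
    · rw [Fintype.card_sigma]
      simp only [Fintype.card_fin]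
      calc ∑ t, D (g t) ≤ ∑ _t : Fin (2 * m), K := by
              refine Finset.sum_le_sum fun t _ => ?_
              cases hgt : g t with
              | none => simp [hD]
              | some i => simpa [hD] using hdegK i
        _ = 2 * m * K := by simp [Finset.sum_const, Fintype.card_fin, mul_comm]
        _ ≤ k := hdeg
    · obtain ⟨p', q', r', s', hpr⟩ := balMonomial_of_fintype
        (fun σ : Σ t : Fin (2 * m), Fin (D (g t)) => P (g σ.1) σ.2)
        (fun σ => Q (g σ.1) σ.2) (fun σ => R (g σ.1) σ.2) (fun σ => S (g σ.1) σ.2)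
      refine ⟨p', q', r', s', fun U => ?_⟩
      rw [← hpr U]
      simp only [balMonomial]
      rw [Finset.prod_mul_distrib]
      congr 1
      · rw [Finset.prod_sigma' Finset.univ (fun _ => Finset.univ)
          (fun t x => (U : Matrix (Fin d) (Fin d) ℂ) (P (g t) x) (Q (g t) x)),
          Finset.univ_sigma_univ]
      · rw [Finset.prod_sigma' Finset.univ (fun _ => Finset.univ)
          (fun t x => (starRingEnd ℂ) ((U : Matrix (Fin d) (Fin d) ℂ) (R (g t) x) (S (g t) x))),
          Finset.univ_sigma_univ]
  choose J hJk p' q' r' s' hrep using key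
  -- rewrite the integrals
  have hint : ∀ (ρ : Measure (Matrix.unitaryGroup (Fin d) ℂ)) [IsProbabilityMeasure ρ],
      ∫ U, (f U - (μ : ℂ)) ^ (2 * m) ∂ρ =
        ∑ g : Fin (2 * m) → Option ι, (∏ t, β (g t)) *
          ∫ U, balMonomial (p' g) (q' g) (r' g) (s' g) U ∂ρ := by
    intro ρ _
    have hpt : (fun U => (f U - (μ : ℂ)) ^ (2 * m)) = fun U =>
        ∑ g : Fin (2 * m) → Option ι, (∏ t, β (g t)) *
          balMonomial (p' g) (q' g) (r' g) (s' g) U := by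
      funext U
      rw [hpow U]
      exact Finset.sum_congr rfl fun g _ => by rw [hrep g U]
    rw [hpt, integral_finset_sum _
      (fun g _ => (balMonomial_integrable (p' g) (q' g) (r' g) (s' g) ρ).const_mul _)]
    exact Finset.sum_congr rfl fun g _ => by
      simp only [← smul_eq_mul, integral_smul]
  rw [hint ν, hint μH, ← Finset.sum_sub_distrib]
  have habs : ‖(∑ g : Fin (2 * m) → Option ι,
      ((∏ t, β (g t)) * ∫ U, balMonomial (p' g) (q' g) (r' g) (s' g) U ∂ν -
        (∏ t, β (g t)) * ∫ U, balMonomial (p' g) (q' g) (r' g) (s' g) U ∂μH))‖ ≤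
      ∑ g : Fin (2 * m) → Option ι, (∏ t, ‖β (g t)‖) * (ε / d ^ k) := by
    refine (norm_sum_le _ _).trans (Finset.sum_le_sum fun g _ => ?_)
    rw [← mul_sub, norm_mul, norm_prod]
    exact mul_le_mul_of_nonneg_left
      (hmono (J g) (hJk g) (p' g) (q' g) (r' g) (s' g))
      (Finset.prod_nonneg fun t _ => norm_nonneg _)
  refine habs.trans (le_of_eq ?_)
  rw [← Finset.sum_mul, mul_comm]
  congr 1
  rw [← Fintype.sum_pow (fun o => ‖β o‖) (2 * m), Fintype.sum_option]
  simp only [hβ, Option.elim]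
  rw [norm_neg, Complex.norm_real, Real.norm_eq_abs, add_comm]
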